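/- arXiv:1508.03751 — 5 statements merged into one kernel-verified Lean document; each statement's English description precedes it below -/
import Mathlib

section
/- Let n ≥ 7 and let M be an n×n array in which every cell is colored red or blue. If the cells of M can be partitioned into n pairwise disjoint balanced diagonals, then the set of blue cells contains a proper subset of size n and the set of red cells contains a proper subset of size n. -/
/-- A diagonal of an `n × n` array: the set of cells forming the graph of a
permutation of `Fin n` (n cells, no two in the same row or column). -/
def IsDiagonal (n : ℕ) (D : Finset (Fin n × Fin n)) : Prop :=
  ∃ σ : Equiv.Perm (Fin n), D = Finset.univ.image fun i => (i, σ i)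

/-- A set of cells is improper if there are indices `i, j` such that every cell
lies in row `i` or in column `j` but not in both. -/
def IsImproper (n : ℕ) (A : Finset (Fin n × Fin n)) : Prop :=
  ∃ i j : Fin n, ∀ c ∈ A, (c.1 = i ∨ c.2 = j) ∧ c ≠ (i, j)

/-- A set of cells is proper if it is not improper. -/
def IsProper (n : ℕ) (A : Finset (Fin n × Fin n)) : Prop := ¬ IsImproper n A

/-- A partition of the cells of the `n × n` array into `n` pairwise disjoint diagonals. -/
def IsDiagonalPartition (n : ℕ) (D : Fin n → Finset (Fin n × Fin n)) : Prop :=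
  (∀ k, IsDiagonal n (D k)) ∧ (∀ k l, k ≠ l → Disjoint (D k) (D l)) ∧
    Finset.univ.biUnion D = Finset.univ

/-- Given a 2-coloring `blue : Fin n × Fin n → Bool` (`true` = blue, `false` = red),
a set of cells is balanced if it contains a blue cell and a red cell. -/
def IsBalanced (n : ℕ) (blue : Fin n × Fin n → Bool) (D : Finset (Fin n × Fin n)) : Prop :=
  (∃ c ∈ D, blue c = true) ∧ (∃ c ∈ D, blue c = false)

/-- Any transversal of a diagonal partition picking cells satisfying `P` gives a
proper set of `n` cells all satisfying `P`. -/
theorem pick_proper (n : ℕ) (P : Fin n × Fin n → Prop)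
    (D : Fin n → Finset (Fin n × Fin n)) (hdiag : ∀ k, IsDiagonal n (D k))
    (hdisj : ∀ k l, k ≠ l → Disjoint (D k) (D l))
    (hcov : Finset.univ.biUnion D = Finset.univ)
    (hex : ∀ k, ∃ c ∈ D k, P c) :
    ∃ B : Finset (Fin n × Fin n), B.card = n ∧ (∀ c ∈ B, P c) ∧ IsProper n B := by
  choose b hbD hbP using hex
  have hinj : Function.Injective b := by
    intro k l h
    by_contra hkl
    exact (Finset.disjoint_left.mp (hdisj k l hkl)) (hbD k) (h ▸ hbD l)
  refine ⟨Finset.univ.image b, ?_, ?_, ?_⟩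
  · rw [Finset.card_image_of_injective _ hinj, Finset.card_univ, Fintype.card_fin]
  · intro c hc
    obtain ⟨k, _, rfl⟩ := Finset.mem_image.mp hc
    exact hbP k
  · rintro ⟨i, j, hij⟩
    have : (i, j) ∈ Finset.univ.biUnion D := by rw [hcov]; exact Finset.mem_univ _
    obtain ⟨t, _, htij⟩ := Finset.mem_biUnion.mp this
    obtain ⟨σ, hσ⟩ := hdiag t
    have hσij : σ i = j := by
      rw [hσ] at htij
      obtain ⟨x, _, hx⟩ := Finset.mem_image.mp htij
      obtain ⟨rfl, h2⟩ := Prod.mk.injEq .. ▸ hx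
      exact h2
    have hbt := hbD t
    rw [hσ] at hbt
    obtain ⟨y, _, hy⟩ := Finset.mem_image.mp hbt
    have hbmem : b t ∈ Finset.univ.image b :=
      Finset.mem_image.mpr ⟨t, Finset.mem_univ _, rfl⟩
    obtain ⟨hor, hne⟩ := hij (b t) hbmem
    rcases hor with h1 | h2
    · apply hne
      have : y = i := by rw [← hy] at h1; exact h1
      rw [← hy, this, hσij]
    · apply hne
      have hyj : σ y = j := by rw [← hy] at h2; exact h2
      have : y = i := σ.injective (by rw [hyj, hσij])
      rw [← hy, this, hσij]

/-- If the array can be partitioned into `n` balanced diagonals, then each color class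
contains a proper set of `n` cells. -/
theorem stmt1 (n : ℕ) (hn : 7 ≤ n) (blue : Fin n × Fin n → Bool)
    (hpart : ∃ D : Fin n → Finset (Fin n × Fin n),
      IsDiagonalPartition n D ∧ ∀ k, IsBalanced n blue (D k)) :
    (∃ B : Finset (Fin n × Fin n), B.card = n ∧ (∀ c ∈ B, blue c = true) ∧ IsProper n B) ∧
    (∃ R : Finset (Fin n × Fin n), R.card = n ∧ (∀ c ∈ R, blue c = false) ∧ IsProper n R) := by
  obtain ⟨D, ⟨hdiag, hdisj, hcov⟩, hbal⟩ := hpart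
  constructor
  · exact pick_proper n (fun c => blue c = true) D hdiag hdisj hcov fun k => (hbal k).1
  · exact pick_proper n (fun c => blue c = false) D hdiag hdisj hcov fun k => (hbal k).2
end

section
/- Let n ≥ 7. Every improper set of cells of an n×n array has at most 2n−2 cells; consequently, every set of at least 2n−1 cells of an n×n array contains a proper subset of size n. -/
/-!
A set is improper exactly when it lies in a punctured cross (row `i` ∪ column `j`
minus `(i, j)`), which has `2n - 2` cells. Two cells in different rows and columns
lie in only two common punctured crosses, so once `A` has `2n - 1` cells, two such
cells of `A` together with one cell of `A` outside each of these two crosses form a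
proper set of at most four cells. Properness is preserved under enlargement, so this
set extends inside `A` to a proper set of `n ≥ 4` cells.
-/

open Finset

section PuncturedCross

variable {α β : Type*} [Fintype α] [Fintype β] [DecidableEq α] [DecidableEq β]

def puncturedCross (i : α) (j : β) : Finset (α × β) :=
  univ.filter fun c => (c.1 = i ∨ c.2 = j) ∧ c ≠ (i, j)

@[simp]
lemma mem_puncturedCross {i : α} {j : β} {c : α × β} :
    c ∈ puncturedCross i j ↔ (c.1 = i ∨ c.2 = j) ∧ c ≠ (i, j) := by
  simp [puncturedCross]

lemma card_puncturedCross_le (i : α) (j : β) :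
    #(puncturedCross i j) ≤ (Fintype.card β - 1) + (Fintype.card α - 1) := by
  have hsub : puncturedCross i j ⊆ ({i} ×ˢ univ.erase j) ∪ (univ.erase i ×ˢ {j}) := by
    rintro ⟨a, b⟩ hc
    simp only [mem_puncturedCross, ne_eq, Prod.mk.injEq] at hc
    simp only [mem_union, mem_product, mem_singleton, mem_erase, mem_univ, and_true]
    tauto
  calc #(puncturedCross i j)
      ≤ #({i} ×ˢ univ.erase j) + #(univ.erase i ×ˢ {j}) :=
        (card_le_card hsub).trans (card_union_le _ _)
    _ = (Fintype.card β - 1) + (Fintype.card α - 1) := by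
        simp [card_erase_of_mem]

lemma eq_or_eq_of_mem_puncturedCross {i : α} {j : β} {c d : α × β}
    (hc : c ∈ puncturedCross i j) (hd : d ∈ puncturedCross i j)
    (h₁ : c.1 ≠ d.1) (h₂ : c.2 ≠ d.2) : (i, j) = (c.1, d.2) ∨ (i, j) = (d.1, c.2) := by
  rw [mem_puncturedCross] at hc hd
  rcases hc.1 with hc | hc <;> rcases hd.1 with hd | hd
  · exact absurd (hc.trans hd.symm) h₁
  · exact Or.inl (by rw [hc, hd])
  · exact Or.inr (by rw [hc, hd])
  · exact absurd (hc.trans hd.symm) h₂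

end PuncturedCross

variable {n : ℕ}

lemma isImproper_iff {A : Finset (Fin n × Fin n)} :
    IsImproper n A ↔ ∃ i j, A ⊆ puncturedCross i j := by
  simp only [IsImproper, subset_iff, mem_puncturedCross]

lemma card_puncturedCross_fin_le (i j : Fin n) : #(puncturedCross i j) ≤ 2 * n - 2 := by
  have := card_puncturedCross_le i j
  simp only [Fintype.card_fin] at this
  omega

lemma IsImproper.card_le {A : Finset (Fin n × Fin n)} (hA : IsImproper n A) :
    #A ≤ 2 * n - 2 := by
  obtain ⟨i, j, hA⟩ := isImproper_iff.mp hA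
  exact (card_le_card hA).trans (card_puncturedCross_fin_le i j)

lemma IsProper.mono {A B : Finset (Fin n × Fin n)} (hAB : A ⊆ B) (hA : IsProper n A) :
    IsProper n B := by
  rw [IsProper, isImproper_iff] at *
  rintro ⟨i, j, hB⟩
  exact hA ⟨i, j, hAB.trans hB⟩

lemma exists_mem_notMem_puncturedCross {A : Finset (Fin n × Fin n)} (hA : 2 * n - 1 ≤ #A)
    (i j : Fin n) : ∃ x ∈ A, x ∉ puncturedCross i j :=
  not_subset.mp fun h => by
    have := (card_le_card h).trans (card_puncturedCross_fin_le i j)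
    have := i.pos
    omega

lemma isProper_of_notMem_puncturedCross {B : Finset (Fin n × Fin n)} {c d x y : Fin n × Fin n}
    (hc : c ∈ B) (hd : d ∈ B) (hx : x ∈ B) (hy : y ∈ B)
    (h₁ : c.1 ≠ d.1) (h₂ : c.2 ≠ d.2)
    (hx' : x ∉ puncturedCross c.1 d.2) (hy' : y ∉ puncturedCross d.1 c.2) : IsProper n B := by
  rw [IsProper, isImproper_iff]
  rintro ⟨i, j, hB⟩
  rcases eq_or_eq_of_mem_puncturedCross (hB hc) (hB hd) h₁ h₂ with h | h <;>
    rw [Prod.mk.injEq] at h <;> obtain ⟨rfl, rfl⟩ := h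
  · exact hx' (hB hx)
  · exact hy' (hB hy)

lemma exists_mem_fst_ne_snd_ne {A : Finset (Fin n × Fin n)} (hn : 2 ≤ n)
    (hA : 2 * n - 1 ≤ #A) : ∃ c ∈ A, ∃ d ∈ A, c.1 ≠ d.1 ∧ c.2 ≠ d.2 := by
  obtain ⟨c, hc⟩ : A.Nonempty := card_pos.mp (by omega)
  by_contra! hline
  -- `A` then lies in the full cross through `c`, which has only `2n - 1` cells, so fills it.
  have hsub : A ⊆ insert c (puncturedCross c.1 c.2) := by
    intro d hd
    rw [mem_insert, mem_puncturedCross]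
    by_cases hdc : d = c
    · exact Or.inl hdc
    · refine Or.inr ⟨?_, hdc⟩
      by_cases h₁ : d.1 = c.1
      · exact Or.inl h₁
      · exact Or.inr (hline c hc d hd (Ne.symm h₁)).symm
  have hcross : puncturedCross c.1 c.2 ⊆ A := by
    have hcard : #(insert c (puncturedCross c.1 c.2)) ≤ #A :=
      (card_insert_le _ _).trans (by have := card_puncturedCross_fin_le c.1 c.2; omega)
    exact (subset_insert _ _).trans (eq_of_subset_of_card_le hsub hcard).symm.subset
  have : Nontrivial (Fin n) := Fin.nontrivial_iff_two_le.mpr hn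
  obtain ⟨a, ha⟩ := exists_ne c.1
  obtain ⟨b, hb⟩ := exists_ne c.2
  have hrow : (c.1, b) ∈ A :=
    hcross (mem_puncturedCross.mpr ⟨Or.inl rfl, fun h => hb (Prod.ext_iff.mp h).2⟩)
  have hcol : (a, c.2) ∈ A :=
    hcross (mem_puncturedCross.mpr ⟨Or.inr rfl, fun h => ha (Prod.ext_iff.mp h).1⟩)
  exact hb (hline _ hcol _ hrow ha).symm

/-- Every improper set has at most `2n - 2` cells; consequently every set of at least
`2n - 1` cells contains a proper subset of size `n`. -/
theorem stmt6 (n : ℕ) (hn : 7 ≤ n) :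
    (∀ A : Finset (Fin n × Fin n), IsImproper n A → A.card ≤ 2 * n - 2) ∧
    (∀ A : Finset (Fin n × Fin n), 2 * n - 1 ≤ A.card →
      ∃ B ⊆ A, B.card = n ∧ IsProper n B) := by
  refine ⟨fun A hA => hA.card_le, fun A hA => ?_⟩
  obtain ⟨c, hc, d, hd, h₁, h₂⟩ := exists_mem_fst_ne_snd_ne (by omega) hA
  obtain ⟨x, hx, hx'⟩ := exists_mem_notMem_puncturedCross hA c.1 d.2
  obtain ⟨y, hy, hy'⟩ := exists_mem_notMem_puncturedCross hA d.1 c.2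
  have hproper : IsProper n {c, d, x, y} :=
    isProper_of_notMem_puncturedCross (by simp) (by simp) (by simp) (by simp) h₁ h₂ hx' hy'
  obtain ⟨B, hsub, hBA, hB⟩ := exists_subsuperset_card_eq (s := {c, d, x, y}) (t := A)
    (by simp [insert_subset_iff, hc, hd, hx, hy]) (card_le_four.trans (by omega))
    (by omega : n ≤ #A)
  exact ⟨B, hBA, hB, hproper.mono hsub⟩
end

section
/- Let n ≥ 7 and let M be an n×n array in which every cell is colored red or blue, and suppose M cannot be partitioned into n pairwise disjoint balanced diagonals. Let T₁ and T₂ be diagonals contained in the set M_b of blue cells with T₁ ∩ T₂ = {(i,j)}. Then there exists a blue cell outside T₁ ∪ T₂ that lies neither in row i nor in column j. -/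
/-!
Suppose the conclusion fails, so that every blue cell lies on `T₁ = graph σ`, on `T₂ = graph τ`,
in row `i` or in column `j`. An idempotent Latin square `L` splits the array into the diagonals
`{(r, c) | L r (σ⁻¹ c) = k}`; each contains the blue cell `(k, σ k)`, so the absence of a balanced
partition makes one of them entirely blue, and that one has at least `n - 3` cells on `T₂`. Hence
it suffices to find, for every `ρ`, an idempotent Latin square none of whose classes contains
`n - 3` cells of the graph of `ρ`. The affine squares `s x + (1 - s) y` over `ZMod n`, `𝔽₈` or
`𝔽₉`, and their prolongations by one row and column for even `n`, give three (resp. six)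
candidates whose classes meet pairwise in few cells of any graph, so by inclusion–exclusion they
cannot all fail.
-/

open Finset Function

structure IsIdempotentLatinSquare {α : Type*} (L : α → α → α) : Prop where
  row_injective : ∀ a, Injective (L a)
  col_injective : ∀ b, Injective fun a => L a b
  apply_self : ∀ a, L a a = a

section SparseSquares

variable {α β : Type*}

theorem IsIdempotentLatinSquare.conj {L : α → α → α} (hL : IsIdempotentLatinSquare L)
    (e : α ≃ β) : IsIdempotentLatinSquare fun x y => e (L (e.symm x) (e.symm y)) where
  row_injective x := e.injective.comp <| (hL.row_injective _).comp e.symm.injective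
  col_injective y := e.injective.comp <| (hL.col_injective _).comp e.symm.injective
  apply_self x := by simp [hL.apply_self]

variable [Fintype α] [DecidableEq α] [Fintype β] [DecidableEq β]

def SparseOnGraph (L : α → α → α) (ρ : α → α) : Prop :=
  ∀ k, #{a | L a (ρ a) = k} + 3 < Fintype.card α

variable (α) in
def HasSparseSquares : Prop :=
  ∀ ρ : α → α, ∃ L : α → α → α, IsIdempotentLatinSquare L ∧ SparseOnGraph L ρ

theorem HasSparseSquares.of_equiv (h : HasSparseSquares α) (e : α ≃ β) :
    HasSparseSquares β := by
  intro ρ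
  obtain ⟨L, hL, hsparse⟩ := h (e.symm ∘ ρ ∘ e)
  refine ⟨_, hL.conj e, fun k => ?_⟩
  have hcard : #{b | e (L (e.symm b) (e.symm (ρ b))) = k} =
      #{a | L a ((e.symm ∘ ρ ∘ e) a) = e.symm k} :=
    card_equiv e.symm fun b => by simp [← Equiv.eq_symm_apply]
  rw [hcard, ← Fintype.card_congr e]
  exact hsparse _

end SparseSquares

section DiagonalPartition

variable {n : ℕ}

theorem isDiagonal_filter_latin {M : Fin n → Fin n → Fin n}
    (hrow : ∀ r, Injective (M r)) (hcol : ∀ c, Injective fun r => M r c) (k : Fin n) :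
    IsDiagonal n {c | M c.1 c.2 = k} := by
  choose f hf using fun r => Finite.injective_iff_surjective.1 (hrow r) k
  have hf_inj : Injective f := fun r r' h => hcol (f r) <| by simp only [hf, h ▸ hf r']
  refine ⟨Equiv.ofBijective f (Finite.injective_iff_bijective.1 hf_inj), ?_⟩
  ext ⟨r, c⟩
  simp only [mem_filter, mem_univ, true_and, mem_image, Prod.mk.injEq, Equiv.ofBijective_apply]
  constructor
  · rintro rfl
    exact ⟨r, rfl, hrow r (hf r)⟩
  · rintro ⟨r, rfl, rfl⟩
    exact hf r

theorem isDiagonalPartition_filter_latin {M : Fin n → Fin n → Fin n}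
    (hrow : ∀ r, Injective (M r)) (hcol : ∀ c, Injective fun r => M r c) :
    IsDiagonalPartition n fun k => {c | M c.1 c.2 = k} := by
  refine ⟨isDiagonal_filter_latin hrow hcol, fun k l hkl => ?_, ?_⟩
  · exact disjoint_filter.2 fun c _ hk hl => hkl (hk ▸ hl)
  · exact eq_univ_of_forall fun c => mem_biUnion.2 ⟨M c.1 c.2, mem_univ _, by simp⟩

theorem not_sparseOnGraph_of_confined {blue : Fin n × Fin n → Bool}
    (hno : ¬ ∃ D : Fin n → Finset (Fin n × Fin n),
      IsDiagonalPartition n D ∧ ∀ k, IsBalanced n blue (D k))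
    {σ τ : Equiv.Perm (Fin n)} (hσ : ∀ r, blue (r, σ r) = true) {i j : Fin n}
    (hconf : ∀ r c, blue (r, c) = true → c = σ r ∨ c = τ r ∨ r = i ∨ c = j)
    {L : Fin n → Fin n → Fin n} (hL : IsIdempotentLatinSquare L) :
    ¬ SparseOnGraph L (σ.symm ∘ τ) := by
  intro hsparse
  have hD := isDiagonalPartition_filter_latin (M := fun r c => L r (σ.symm c))
    (fun r => (hL.row_injective r).comp σ.symm.injective) (fun c => hL.col_injective _)
  obtain ⟨k, hk⟩ : ∃ k, ¬ IsBalanced n blue {c | L c.1 (σ.symm c.2) = k} := by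
    by_contra! h
    exact hno ⟨_, hD, h⟩
  have hblue r b (hrb : L r b = k) : blue (r, σ b) = true := by
    by_contra hred
    exact hk ⟨⟨(k, σ k), by simp [hL.apply_self], hσ k⟩,
      ⟨(r, σ b), by simp [hrb], by simpa using hred⟩⟩
  set S : Finset (Fin n) := {a | L a (σ.symm (τ a)) = k}
  set C : Finset (Fin n) := {a | L a (σ.symm j) = k}
  have hcover : univ ⊆ {k} ∪ S ∪ {i} ∪ C := by
    intro a _
    obtain ⟨b, hb⟩ := Finite.injective_iff_surjective.1 (hL.row_injective a) k
    rcases hconf _ _ (hblue a b hb) with h | h | rfl | h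
    · rw [σ.injective h, hL.apply_self] at hb
      simp [hb]
    · rw [σ.eq_symm_apply.2 h] at hb
      simp [S, hb]
    · simp
    · rw [σ.eq_symm_apply.2 h] at hb
      simp [C, hb]
  have hC : #C ≤ 1 :=
    card_le_one.2 fun a ha a' ha' =>
      hL.col_injective _ ((mem_filter.1 ha).2.trans (mem_filter.1 ha').2.symm)
  have := calc n = #(univ : Finset (Fin n)) := by simp
    _ ≤ #({k} ∪ S ∪ {i} ∪ C) := card_le_card hcover
    _ ≤ #S + 3 := by
      grw [card_union_le, card_union_le, card_union_le, hC, card_singleton, card_singleton]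
      omega
  exact (hsparse k).not_ge (by simpa using this)

end DiagonalPartition

section InclusionExclusion

variable {α : Type*} [Fintype α] [DecidableEq α]

theorem card_add_card_le_card_add_card_inter (S T : Finset α) :
    #S + #T ≤ Fintype.card α + #(S ∩ T) := by
  rw [← card_union_add_card_inter]
  grw [card_le_univ (S ∪ T)]

theorem two_mul_card_le_of_three_sets {S : Fin 3 → Finset α} {h : ℕ}
    (hS : ∀ t, Fintype.card α ≤ #(S t) + 3)
    (hI : ∀ t t', t ≠ t' → #(S t ∩ S t') ≤ h) :
    2 * Fintype.card α ≤ 9 + 3 * h := by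
  have h₁ := card_union_add_card_inter (S 0) (S 1)
  have h₂ := card_union_add_card_inter (S 0 ∪ S 1) (S 2)
  have h₃ : #((S 0 ∪ S 1) ∩ S 2) ≤ #(S 0 ∩ S 2) + #(S 1 ∩ S 2) := by
    rw [union_inter_distrib_right]
    exact card_union_le _ _
  have := card_le_univ (S 0 ∪ S 1 ∪ S 2)
  have := hS 0; have := hS 1; have := hS 2
  have := hI 0 1 (by decide); have := hI 0 2 (by decide); have := hI 1 2 (by decide)
  omega

end InclusionExclusion

section Affine

variable {R : Type*} [CommRing R]

def affineSquare (s x y : R) : R := s * x + (1 - s) * y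

theorem isIdempotentLatinSquare_affineSquare {s : R} (hs : IsUnit s) (hs' : IsUnit (1 - s)) :
    IsIdempotentLatinSquare (affineSquare s) where
  row_injective _ _ _ h := hs'.mul_left_cancel (add_left_cancel h)
  col_injective _ _ _ h := hs.mul_left_cancel (add_right_cancel h)
  apply_self x := by simp only [affineSquare]; ring

theorem sub_mul_eq_of_affineSquare_eq {s s' x y k k' : R} (h : affineSquare s x y = k)
    (h' : affineSquare s' x y = k') : (s - s') * x = (1 - s') * k - (1 - s) * k' := by
  subst h h'
  simp only [affineSquare]
  ring

theorem injective_affineSquare_addRight (s c : R) :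
    Injective fun x => affineSquare s x (Equiv.addRight c x) := fun x y h => by
  simp only [affineSquare, Equiv.coe_addRight] at h
  linear_combination h

variable [Fintype R] [DecidableEq R]

theorem card_filter_mul_eq_le (d e : R) : #{x | d * x = e} ≤ #{x | d * x = 0} := by
  obtain ⟨x₀, hx₀⟩ | hnone := em (∃ x₀, d * x₀ = e)
  · refine card_le_card_of_injOn (· - x₀) (fun x hx => ?_)
      (fun x _ y _ h => sub_left_injective h)
    simp_all [mul_sub]
  · simp_all

theorem card_filter_mul_eq_zero_le_one {d : R} (hd : IsUnit d) : #{x | d * x = 0} ≤ 1 :=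
  card_le_one.2 fun x hx y hy => by simp_all [hd.mul_right_eq_zero]

structure IsSlopeTriple (g : ℕ) (s : Fin 3 → R) : Prop where
  isUnit : ∀ t, IsUnit (s t)
  isUnit_one_sub : ∀ t, IsUnit (1 - s t)
  card_ker_le : ∀ t t', t ≠ t' → #{x | (s t - s t') * x = 0} ≤ g

variable {g : ℕ} {s : Fin 3 → R}

theorem IsSlopeTriple.isIdempotentLatinSquare (hs : IsSlopeTriple g s) (t : Fin 3) :
    IsIdempotentLatinSquare (affineSquare (s t)) :=
  isIdempotentLatinSquare_affineSquare (hs.isUnit t) (hs.isUnit_one_sub t)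

theorem IsSlopeTriple.card_agree_le (hs : IsSlopeTriple g s) {t t' : Fin 3} (htt : t ≠ t')
    (f : R → R) (k k' : R) :
    #{x | affineSquare (s t) x (f x) = k ∧ affineSquare (s t') x (f x) = k'} ≤ g :=
  calc _ ≤ #{x | (s t - s t') * x = (1 - s t') * k - (1 - s t) * k'} :=
        card_le_card fun x hx => by
          simp only [mem_filter, mem_univ, true_and] at hx ⊢
          exact sub_mul_eq_of_affineSquare_eq hx.1 hx.2
    _ ≤ _ := card_filter_mul_eq_le _ _
    _ ≤ g := hs.card_ker_le t t' htt

theorem IsSlopeTriple.hasSparseSquares (hs : IsSlopeTriple g s)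
    (hR : 9 + 3 * g < 2 * Fintype.card R) : HasSparseSquares R := by
  intro ρ
  by_contra! hbad
  have hlarge t : ∃ k, Fintype.card R ≤ #{a | affineSquare (s t) a (ρ a) = k} + 3 := by
    simpa [SparseOnGraph] using hbad _ (hs.isIdempotentLatinSquare t)
  choose k hk using hlarge
  refine hR.not_ge (two_mul_card_le_of_three_sets hk fun t t' htt => ?_)
  rw [← filter_and]
  exact hs.card_agree_le htt ρ _ _

end Affine

section Prolong

variable {α : Type*} [DecidableEq α]

-- The cells `(x, τ x)` of a transversal move to the new symbol `none`, and their symbols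
-- `L x (τ x)` fill the new row and column.
def prolong (L : α → α → α) (τ : Equiv.Perm α) : Option α → Option α → Option α
  | some x, some y => if y = τ x then none else some (L x y)
  | some x, none => some (L x (τ x))
  | none, some y => some (L (τ.symm y) y)
  | none, none => none

theorem IsIdempotentLatinSquare.prolong {L : α → α → α} (hL : IsIdempotentLatinSquare L)
    {τ : Equiv.Perm α} (hτ : ∀ x, τ x ≠ x) (htr : Injective fun x => L x (τ x)) :
    IsIdempotentLatinSquare (prolong L τ) where
  row_injective a := by
    have hrow x y y' : L x y = L x y' ↔ y = y' := (hL.row_injective x).eq_iff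
    rcases a with _ | x <;> rintro (_ | y) (_ | y') h <;>
      simp only [_root_.prolong, Option.some.injEq, reduceCtorEq] at h
    all_goals try rfl
    · have : L (τ.symm y) (τ (τ.symm y)) = L (τ.symm y') (τ (τ.symm y')) := by simpa using h
      simpa using htr this
    all_goals split_ifs at h <;> simp_all
  col_injective b := by
    have hcol x x' y : L x y = L x' y ↔ x = x' := (hL.col_injective y).eq_iff
    rcases b with _ | y <;> rintro (_ | x) (_ | x') h <;>
      simp only [_root_.prolong, Option.some.injEq, reduceCtorEq] at h
    all_goals try rfl
    · simpa using htr h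
    all_goals split_ifs at h <;> simp_all [← Equiv.eq_symm_apply]
  apply_self a := by
    rcases a with _ | x
    · rfl
    · simp [_root_.prolong, (hτ x).symm, hL.apply_self]

theorem prolong_eq_none_iff {L : α → α → α} {τ : Equiv.Perm α} {a b : Option α} :
    prolong L τ a b = none ↔
      a = none ∧ b = none ∨ ∃ x, a = some x ∧ b = some (τ x) := by
  rcases a with _ | x <;> rcases b with _ | y <;> simp [prolong]

variable [Fintype α]

theorem card_prolong_eq_none_and_le (L L' : α → α → α) {τ τ' : Equiv.Perm α}
    (hττ' : ∀ x, τ x ≠ τ' x) (ρ : Option α → Option α) :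
    #{a | prolong L τ a (ρ a) = none ∧ prolong L' τ' a (ρ a) = none} ≤ 1 := by
  have h_none a (ha : prolong L τ a (ρ a) = none ∧ prolong L' τ' a (ρ a) = none) :
      a = none := by
    simp only [prolong_eq_none_iff] at ha
    obtain ⟨⟨h, -⟩ | ⟨x, rfl, hx⟩, ⟨h', -⟩ | ⟨x', hx', hx'ρ⟩⟩ := ha <;>
      simp_all
  exact card_le_one.2 fun a ha b hb => by
    rw [h_none a (mem_filter.1 ha).2, h_none b (mem_filter.1 hb).2]

theorem card_prolong_agree_le (L L' : α → α → α) {τ : Equiv.Perm α}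
    (htr : Injective fun x => L x (τ x)) (ρ : Option α → Option α) (k k' : α) :
    #{a | prolong L τ a (ρ a) = some k ∧ prolong L' τ a (ρ a) = some k'} ≤
      2 + #{x | L x ((ρ (some x)).getD x) = k ∧ L' x ((ρ (some x)).getD x) = k'} := by
  set A : Finset α := {x | L x ((ρ (some x)).getD x) = k ∧ L' x ((ρ (some x)).getD x) = k'}
  set B : Finset α := {x | L x (τ x) = k}
  have hB : #B ≤ 1 :=
    card_le_one.2 fun x hx y hy => htr ((mem_filter.1 hx).2.trans (mem_filter.1 hy).2.symm)
  calc _ ≤ #(insert none ((B ∪ A).map .some)) := by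
        refine card_le_card fun a ha => ?_
        rcases a with _ | x
        · simp
        simp only [mem_filter, mem_univ, true_and] at ha
        rcases hρ : ρ (some x) with _ | y <;> simp only [hρ, prolong, Option.some.injEq] at ha
        · simp [B, ha.1]
        · split_ifs at ha <;> simp_all [A]
    _ ≤ 2 + #A := by
        grw [card_insert_le, card_map, card_union_le, hB]
        omega

end Prolong

section AffineProlong

variable {R : Type*} [CommRing R] [DecidableEq R]

theorem isIdempotentLatinSquare_prolong_affineSquare {s c : R} (hs : IsUnit s)
    (hs' : IsUnit (1 - s)) (hc : c ≠ 0) :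
    IsIdempotentLatinSquare (prolong (affineSquare s) (Equiv.addRight c)) :=
  (isIdempotentLatinSquare_affineSquare hs hs').prolong (by simpa using hc)
    (injective_affineSquare_addRight s c)

variable [Fintype R] {g : ℕ} {s : Fin 3 → R}

theorem IsSlopeTriple.hasSparseSquares_option (hs : IsSlopeTriple g s)
    (hR : 15 + 3 * g < 2 * (Fintype.card R + 1)) : HasSparseSquares (Option R) := by
  intro ρ
  by_contra! hbad
  have : Nontrivial R := Fintype.one_lt_card_iff_nontrivial.1 (by omega)
  set P : R → Fin 3 → Option R → Option R → Option R :=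
    fun c t => prolong (affineSquare (s t)) (Equiv.addRight c)
  have hlarge (c : R) (hc : c ≠ 0) (t : Fin 3) :
      ∃ k, Fintype.card (Option R) ≤ #{a | P c t a (ρ a) = k} + 3 := by
    simpa only [SparseOnGraph, not_forall, not_lt] using hbad (P c t)
      (isIdempotentLatinSquare_prolong_affineSquare (hs.isUnit t) (hs.isUnit_one_sub t) hc)
  -- Two affine classes of the same shift meet in at most `2 + g` cells of the graph, so the
  -- large class of some slope is the `none`-class, which does not depend on the slope.
  have hnone (c : R) (hc : c ≠ 0) :
      Fintype.card (Option R) ≤ #{a | P c 0 a (ρ a) = none} + 3 := by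
    choose k hk using hlarge c hc
    by_contra hsmall
    have hsome t : ∃ κ, k t = some κ := by
      refine Option.ne_none_iff_exists'.1 fun hkt => hsmall ?_
      convert hk t using 4
      simp only [hkt, P, prolong_eq_none_iff]
    choose κ hκ using hsome
    have := two_mul_card_le_of_three_sets hk (h := 2 + g) fun t t' htt => by
      rw [← filter_and, hκ, hκ]
      grw [card_prolong_agree_le _ _ (injective_affineSquare_addRight _ _), hs.card_agree_le htt]
    rw [Fintype.card_option] at this
    omega
  have hs₀ : (1 : R) ≠ s 0 := fun h => (hs.isUnit_one_sub 0).ne_zero (by rw [← h, sub_self])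
  have h₁ := hnone 1 one_ne_zero
  have h₂ := hnone (s 0) (hs.isUnit 0).ne_zero
  have h₁₂ : #{a | P 1 0 a (ρ a) = none ∧ P (s 0) 0 a (ρ a) = none} ≤ 1 :=
    card_prolong_eq_none_and_le _ _ (by simpa using hs₀) ρ
  have := card_add_card_le_card_add_card_inter {a | P 1 0 a (ρ a) = none}
    {a | P (s 0) 0 a (ρ a) = none}
  rw [← filter_and] at this
  rw [Fintype.card_option] at *
  omega

end AffineProlong

section SlopeTriples

theorem exists_isSlopeTriple_of_field (F : Type*) [Field F] [Fintype F] [DecidableEq F]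
    (hF : 5 ≤ Fintype.card F) : ∃ s : Fin 3 → F, IsSlopeTriple 1 s := by
  let S : Finset F := univ \ {0, 1}
  have hS : 3 ≤ #S := by
    grw [← le_card_sdiff, card_univ, card_insert_le, card_singleton]
    omega
  obtain ⟨f⟩ : Nonempty (Fin 3 ↪ S) :=
    Function.Embedding.nonempty_of_card_le (by simpa using hS)
  have hf t : (f t : F) ≠ 0 ∧ (f t : F) ≠ 1 := by
    have := (f t).2
    simpa only [S, mem_sdiff, mem_univ, mem_insert, mem_singleton, true_and, not_or] using this
  refine ⟨fun t => f t, fun t => (hf t).1.isUnit, fun t => (sub_ne_zero.2 (hf t).2.symm).isUnit,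
    fun t t' htt => card_filter_mul_eq_zero_le_one (sub_ne_zero.2 fun h => htt ?_).isUnit⟩
  exact f.injective (Subtype.ext h)

variable {m : ℕ} [NeZero m]

theorem card_filter_three_mul_eq_zero_le : #{x : ZMod m | 3 * x = 0} ≤ 3 := by
  simpa [nsmul_eq_mul] using IsAddCyclic.card_nsmul_eq_zero_le (α := ZMod m) (n := 3) (by norm_num)

theorem card_filter_three_mul_eq_zero_le_one (h : ¬ 3 ∣ m) :
    #{x : ZMod m | 3 * x = 0} ≤ 1 := by
  refine card_filter_mul_eq_zero_le_one ?_
  simpa using (ZMod.unitOfCoprime 3 ((Nat.prime_three.coprime_iff_not_dvd).2 h)).isUnit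

theorem isSlopeTriple_zmod (hm : Odd m) :
    IsSlopeTriple #{x : ZMod m | 3 * x = 0} ![(2 : ZMod m)⁻¹, 2, -1] := by
  have h2 : (2 : ZMod m) * 2⁻¹ = 1 := by
    simpa using ZMod.coe_mul_inv_eq_one 2 (Nat.coprime_two_left.2 hm)
  have hu₂ : IsUnit (2 : ZMod m) := IsUnit.of_mul_eq_one _ h2
  have hw : IsUnit (2 : ZMod m)⁻¹ := IsUnit.of_mul_eq_one_right _ h2
  have hker (u : ZMod m) (hu : IsUnit u) : #{x | 3 * u * x = 0} = #{x : ZMod m | 3 * x = 0} :=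
    congrArg card <| filter_congr fun x _ => by rw [mul_right_comm, hu.mul_left_eq_zero]
  refine ⟨fun t => ?_, fun t => ?_, fun t t' htt => ?_⟩
  · fin_cases t
    exacts [hw, hu₂, isUnit_one.neg]
  · fin_cases t
    · show IsUnit ((1 : ZMod m) - 2⁻¹)
      rwa [show (1 : ZMod m) - 2⁻¹ = 2⁻¹ by linear_combination -h2]
    · show IsUnit ((1 : ZMod m) - 2)
      rw [show (1 : ZMod m) - 2 = -1 by ring]
      exact isUnit_one.neg
    · show IsUnit ((1 : ZMod m) - -1)
      rwa [show (1 : ZMod m) - -1 = 2 by ring]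
  · obtain ⟨u, hu, hdiff⟩ : ∃ u, IsUnit u ∧
        ![(2 : ZMod m)⁻¹, 2, -1] t - ![(2 : ZMod m)⁻¹, 2, -1] t' = 3 * u := by
      fin_cases t <;> fin_cases t' <;>
        simp only [Fin.zero_eta, Fin.mk_one, Fin.reduceFinMk, Fin.isValue, ne_eq,
          not_true_eq_false, Matrix.cons_val_zero, Matrix.cons_val_one, Matrix.cons_val,
          sub_neg_eq_add] at htt ⊢
      exacts [⟨-2⁻¹, hw.neg, by linear_combination 2 * h2⟩,
        ⟨2⁻¹, hw, by linear_combination -h2⟩, ⟨2⁻¹, hw, by linear_combination -2 * h2⟩,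
        ⟨1, isUnit_one, by ring⟩, ⟨-2⁻¹, hw.neg, by linear_combination h2⟩,
        ⟨-1, isUnit_one.neg, by ring⟩]
    rw [hdiff, hker u hu]

end SlopeTriples

section FinCases

variable {n : ℕ}

theorem hasSparseSquares_fin_of_field (F : Type*) [Field F] [Finite F] (hF : Nat.card F = n)
    (hn : 7 ≤ n) : HasSparseSquares (Fin n) := by
  classical
  have := Fintype.ofFinite F
  rw [Nat.card_eq_fintype_card] at hF
  obtain ⟨s, hs⟩ := exists_isSlopeTriple_of_field F (by omega)
  exact (hs.hasSparseSquares (by omega)).of_equiv (Fintype.equivFinOfCardEq hF)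

theorem hasSparseSquares_fin_succ_of_field (F : Type*) [Field F] [Finite F]
    (hF : Nat.card F = n) (hn : 9 ≤ n) : HasSparseSquares (Fin (n + 1)) := by
  classical
  have := Fintype.ofFinite F
  rw [Nat.card_eq_fintype_card] at hF
  obtain ⟨s, hs⟩ := exists_isSlopeTriple_of_field F (by omega)
  exact (hs.hasSparseSquares_option (by omega)).of_equiv
    (Fintype.equivFinOfCardEq (by rw [Fintype.card_option, hF]))

theorem hasSparseSquares_fin_of_odd (hodd : Odd n) (hn : 7 ≤ n) (hn9 : n ≠ 9) :
    HasSparseSquares (Fin n) := by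
  have : NeZero n := ⟨by omega⟩
  have hg : 9 + 3 * #{x : ZMod n | 3 * x = 0} < 2 * Fintype.card (ZMod n) := by
    rw [ZMod.card]
    by_cases h3 : 3 ∣ n
    · have := card_filter_three_mul_eq_zero_le (m := n)
      obtain ⟨k, rfl⟩ := h3
      obtain ⟨l, hl⟩ := hodd
      omega
    · have := card_filter_three_mul_eq_zero_le_one h3
      omega
  exact ((isSlopeTriple_zmod hodd).hasSparseSquares hg).of_equiv
    (Fintype.equivFinOfCardEq (ZMod.card n))

theorem hasSparseSquares_fin_succ_of_odd (hodd : Odd n) (hn : 11 ≤ n) :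
    HasSparseSquares (Fin (n + 1)) := by
  have : NeZero n := ⟨by omega⟩
  have hg : 15 + 3 * #{x : ZMod n | 3 * x = 0} < 2 * (Fintype.card (ZMod n) + 1) := by
    rw [ZMod.card]
    by_cases h3 : 3 ∣ n
    · have := card_filter_three_mul_eq_zero_le (m := n)
      obtain ⟨k, rfl⟩ := h3
      obtain ⟨l, hl⟩ := hodd
      omega
    · have := card_filter_three_mul_eq_zero_le_one h3
      omega
  exact ((isSlopeTriple_zmod hodd).hasSparseSquares_option hg).of_equiv
    (Fintype.equivFinOfCardEq (by rw [Fintype.card_option, ZMod.card]))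

-- The orders `8, 9, 10`, where the `ZMod` constructions are too weak, use `𝔽₈` and `𝔽₉`.
theorem hasSparseSquares_fin (hn : 7 ≤ n) : HasSparseSquares (Fin n) := by
  rcases Nat.even_or_odd n with ⟨k, rfl⟩ | hodd
  · obtain rfl | rfl | hk : k = 4 ∨ k = 5 ∨ 6 ≤ k := by omega
    · exact hasSparseSquares_fin_of_field (GaloisField 2 3) (GaloisField.card 2 3 (by norm_num))
        (by norm_num)
    · exact hasSparseSquares_fin_succ_of_field (GaloisField 3 2)
        (GaloisField.card 3 2 (by norm_num)) (by norm_num)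
    · obtain ⟨m, hm⟩ : ∃ m, k + k = m + 1 := ⟨k + k - 1, by omega⟩
      rw [hm]
      exact hasSparseSquares_fin_succ_of_odd ⟨k - 1, by omega⟩ (by omega)
  · obtain rfl | hn9 := eq_or_ne n 9
    · exact hasSparseSquares_fin_of_field (GaloisField 3 2) (GaloisField.card 3 2 (by norm_num))
        (by norm_num)
    · exact hasSparseSquares_fin_of_odd hodd hn hn9

end FinCases

theorem stmt8_general (n : ℕ) (hn : 7 ≤ n) (blue : Fin n × Fin n → Bool)
    (hno : ¬ ∃ D : Fin n → Finset (Fin n × Fin n),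
      IsDiagonalPartition n D ∧ ∀ k, IsBalanced n blue (D k))
    (T₁ T₂ : Finset (Fin n × Fin n)) (hT₁ : IsDiagonal n T₁) (hT₂ : IsDiagonal n T₂)
    (hT₁b : ∀ c ∈ T₁, blue c = true)
    (i j : Fin n) :
    ∃ c : Fin n × Fin n, blue c = true ∧ c ∉ T₁ ∪ T₂ ∧ c.1 ≠ i ∧ c.2 ≠ j := by
  obtain ⟨σ, rfl⟩ := hT₁
  obtain ⟨τ, rfl⟩ := hT₂
  by_contra! hnone
  have hconf r c (hrc : blue (r, c) = true) : c = σ r ∨ c = τ r ∨ r = i ∨ c = j := by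
    by_contra! h
    exact h.2.2.2 (hnone (r, c) hrc (by simp [h.1.symm, h.2.1.symm]) h.2.2.1)
  obtain ⟨L, hL, hsparse⟩ := hasSparseSquares_fin hn (σ.symm ∘ τ)
  exact not_sparseOnGraph_of_confined hno (fun r => hT₁b _ (by simp)) hconf hL hsparse

/-- If `M` has no partition into balanced diagonals and `T₁, T₂` are blue diagonals with
`T₁ ∩ T₂ = {(i,j)}`, then there is a blue cell outside `T₁ ∪ T₂` avoiding row `i` and
column `j`. -/
theorem stmt8 (n : ℕ) (hn : 7 ≤ n) (blue : Fin n × Fin n → Bool)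
    (hno : ¬ ∃ D : Fin n → Finset (Fin n × Fin n),
      IsDiagonalPartition n D ∧ ∀ k, IsBalanced n blue (D k))
    (T₁ T₂ : Finset (Fin n × Fin n)) (hT₁ : IsDiagonal n T₁) (hT₂ : IsDiagonal n T₂)
    (hT₁b : ∀ c ∈ T₁, blue c = true) (hT₂b : ∀ c ∈ T₂, blue c = true)
    (i j : Fin n) (hmeet : T₁ ∩ T₂ = {(i, j)}) :
    ∃ c : Fin n × Fin n, blue c = true ∧ c ∉ T₁ ∪ T₂ ∧ c.1 ≠ i ∧ c.2 ≠ j :=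
  stmt8_general n hn blue hno T₁ T₂ hT₁ hT₂ hT₁b i j
end

section
/- Let n ≥ 7 and let M be an n×n array in which every cell is colored red or blue. Let R be a p×q sub-rectangle of M with p + q = n + 1 and p − 2 ≤ q ≤ p + 2, containing a set X of n blue cells and a set Y of n red cells. Then there exists a bijection φ from X to Y such that for every x ∈ X, the cells x and φ(x) lie in different rows and different columns. Consequently one can fill n blue cells and n red cells of R with the symbols 1,...,n, each symbol appearing in exactly one blue cell and exactly one red cell, so as to form a partial Latin square of order n. -/
/-- A partial Latin square of order `n`, given as a partial filling of the `n × n`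
array with symbols from `Fin n`: no symbol occurs twice in a row or twice in a column. -/
def IsPartialLatin (n : ℕ) (L : Fin n × Fin n → Option (Fin n)) : Prop :=
  ∀ c₁ c₂ : Fin n × Fin n, c₁ ≠ c₂ → (L c₁).isSome → L c₁ = L c₂ →
    c₁.1 ≠ c₂.1 ∧ c₁.2 ≠ c₂.2

section aux
variable {n : ℕ}

lemma cross_card {P Q : Finset (Fin n)} {c : Fin n × Fin n}
    (hc : c ∈ P ×ˢ Q) (hpq : P.card + Q.card = n + 1) :
    ((P ×ˢ Q).filter (fun d => d.1 = c.1 ∨ d.2 = c.2)).card ≤ n := by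
  classical
  have hc1 : c.1 ∈ P := (Finset.mem_product.mp hc).1
  have hc2 : c.2 ∈ Q := (Finset.mem_product.mp hc).2
  have heq : (P ×ˢ Q).filter (fun d => d.1 = c.1 ∨ d.2 = c.2)
      = ({c.1} ×ˢ Q) ∪ (P ×ˢ {c.2}) := by
    ext d
    simp only [Finset.mem_filter, Finset.mem_product, Finset.mem_union, Finset.mem_singleton]
    constructor
    · rintro ⟨⟨h1, h2⟩, h3 | h3⟩
      · exact Or.inl ⟨h3, h2⟩
      · exact Or.inr ⟨h1, h3⟩
    · rintro (⟨h1, h2⟩ | ⟨h1, h2⟩)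
      · exact ⟨⟨h1 ▸ hc1, h2⟩, Or.inl h1⟩
      · exact ⟨⟨h1, h2 ▸ hc2⟩, Or.inr h2⟩
  rw [heq]
  have h1 : c ∈ ({c.1} ×ˢ Q) ∩ (P ×ˢ {c.2}) :=
    Finset.mem_inter.mpr ⟨Finset.mem_product.mpr ⟨Finset.mem_singleton_self _, hc2⟩,
      Finset.mem_product.mpr ⟨hc1, Finset.mem_singleton_self _⟩⟩
  have h2 := Finset.card_union_add_card_inter ({c.1} ×ˢ Q) (P ×ˢ {c.2})
  have h3 : 1 ≤ (({c.1} ×ˢ Q) ∩ (P ×ˢ {c.2})).card := Finset.card_pos.mpr ⟨c, h1⟩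
  have h4 : ({c.1} ×ˢ Q).card = Q.card := by simp
  have h5 : (P ×ˢ {c.2}).card = P.card := by simp
  omega

lemma hall_bound (hn : 4 ≤ n) (P Q : Finset (Fin n))
    (hpq : P.card + Q.card = n + 1)
    (X Y : Finset (Fin n × Fin n)) (blue : Fin n × Fin n → Bool)
    (hXR : X ⊆ P ×ˢ Q) (hXcard : X.card = n) (hXb : ∀ c ∈ X, blue c = true)
    (hYR : Y ⊆ P ×ˢ Q) (hYcard : Y.card = n) (hYr : ∀ c ∈ Y, blue c = false)
    (S : Finset (Fin n × Fin n)) (hS : S ⊆ X) (B : Finset (Fin n × Fin n))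
    (hBmem : ∀ y, y ∈ B ↔ y ∈ Y ∧ ∀ x ∈ S, y.1 = x.1 ∨ y.2 = x.2) :
    S.card + B.card ≤ n := by
  classical
  have hBY : B ⊆ Y := fun y hy => ((hBmem y).mp hy).1
  have hXY : ∀ c, c ∈ X → c ∉ Y := by
    intro c hc hc'
    have h1 := hXb c hc
    have h2 := hYr c hc'
    simp [h1] at h2
  rcases Nat.lt_or_ge S.card 2 with hS2 | hS2
  · rcases Nat.lt_or_ge S.card 1 with hS1 | hS1
    · have : B.card ≤ n := le_trans (Finset.card_le_card hBY) (le_of_eq hYcard)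
      omega
    · obtain ⟨x, hx⟩ : ∃ x, x ∈ S := Finset.card_pos.mp (by omega)
      have hxX := hS hx
      have hsub : B ⊆ ((P ×ˢ Q).filter (fun d => d.1 = x.1 ∨ d.2 = x.2)).erase x := by
        intro y hy
        rw [Finset.mem_erase]
        obtain ⟨hyY, hcond⟩ := (hBmem _).mp hy
        exact ⟨fun h => hXY x hxX (h ▸ hyY), Finset.mem_filter.mpr ⟨hYR hyY, hcond x hx⟩⟩
      have hcc := cross_card (hXR hxX) hpq
      have hxm : x ∈ (P ×ˢ Q).filter (fun d => d.1 = x.1 ∨ d.2 = x.2) :=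
        Finset.mem_filter.mpr ⟨hXR hxX, Or.inl rfl⟩
      have hec := Finset.card_erase_of_mem hxm
      have := Finset.card_le_card hsub
      omega
  · obtain ⟨x1, hx1, x2, hx2, hx12⟩ := Finset.one_lt_card.mp hS2
    rcases Nat.lt_or_ge B.card 2 with hB2 | hB2
    · rcases Nat.lt_or_ge B.card 1 with hB1 | hB1
      · have : S.card ≤ n := le_trans (Finset.card_le_card hS) (le_of_eq hXcard)
        omega
      · obtain ⟨y, hy⟩ : ∃ y, y ∈ B := Finset.card_pos.mp (by omega)
        obtain ⟨hyY, hcond⟩ := (hBmem _).mp hy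
        have hsub : S ⊆ ((P ×ˢ Q).filter (fun d => d.1 = y.1 ∨ d.2 = y.2)).erase y := by
          intro x hx
          rw [Finset.mem_erase]
          refine ⟨fun h => hXY x (hS hx) (h ▸ hyY), Finset.mem_filter.mpr ⟨hXR (hS hx), ?_⟩⟩
          rcases hcond x hx with h | h
          · exact Or.inl h.symm
          · exact Or.inr h.symm
        have hcc := cross_card (hYR hyY) hpq
        have hym : y ∈ (P ×ˢ Q).filter (fun d => d.1 = y.1 ∨ d.2 = y.2) :=
          Finset.mem_filter.mpr ⟨hYR hyY, Or.inl rfl⟩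
        have hec := Finset.card_erase_of_mem hym
        have := Finset.card_le_card hsub
        omega
    · obtain ⟨y1, hy1, y2, hy2, hy12⟩ := Finset.one_lt_card.mp hB2
      obtain ⟨hy1Y, hc1⟩ := (hBmem _).mp hy1
      obtain ⟨hy2Y, hc2⟩ := (hBmem _).mp hy2
      by_cases hrow : y1.1 = y2.1
      · have hcol : y1.2 ≠ y2.2 := fun h => hy12 (Prod.ext hrow h)
        have hSrow : ∀ x ∈ S, x.1 = y1.1 := by
          intro x hx
          rcases hc1 x hx with h | h
          · exact h.symm
          · rcases hc2 x hx with h' | h'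
            · exact h'.symm.trans hrow.symm
            · exact absurd (h.trans h'.symm) hcol
        have hx1r := hSrow x1 hx1
        have hx2r := hSrow x2 hx2
        have hx12c : x1.2 ≠ x2.2 := fun h => hx12 (Prod.ext (hx1r.trans hx2r.symm) h)
        have hBrow : ∀ y ∈ B, y.1 = y1.1 := by
          intro y hy
          obtain ⟨hyY, hcy⟩ := (hBmem _).mp hy
          rcases hcy x1 hx1 with h | h
          · exact h.trans hx1r
          · rcases hcy x2 hx2 with h' | h'
            · exact h'.trans hx2r
            · exact absurd (h.symm.trans h') hx12c
        have hdisj : Disjoint S B := by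
          rw [Finset.disjoint_left]
          intro a ha hab
          exact hXY a (hS ha) (hBY hab)
        have hsub : S ∪ B ⊆ ({y1.1} ×ˢ Q) := by
          intro a ha
          rcases Finset.mem_union.mp ha with h | h
          · exact Finset.mem_product.mpr ⟨Finset.mem_singleton.mpr (hSrow a h),
              (Finset.mem_product.mp (hXR (hS h))).2⟩
          · exact Finset.mem_product.mpr ⟨Finset.mem_singleton.mpr (hBrow a h),
              (Finset.mem_product.mp (hYR (hBY h))).2⟩
        have hcu := Finset.card_le_card hsub
        rw [Finset.card_union_of_disjoint hdisj] at hcu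
        have hq : ({y1.1} ×ˢ Q).card = Q.card := by simp
        have hqn : Q.card ≤ n := by
          have := Finset.card_le_univ Q
          simpa using this
        omega
      · by_cases hcol : y1.2 = y2.2
        · have hSc : ∀ x ∈ S, x.2 = y1.2 := by
            intro x hx
            rcases hc1 x hx with h | h
            · rcases hc2 x hx with h' | h'
              · exact absurd (h.trans h'.symm) hrow
              · exact h'.symm.trans hcol.symm
            · exact h.symm
          have hx1c := hSc x1 hx1
          have hx2c := hSc x2 hx2
          have hx12r : x1.1 ≠ x2.1 := fun h => hx12 (Prod.ext h (hx1c.trans hx2c.symm))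
          have hBc : ∀ y ∈ B, y.2 = y1.2 := by
            intro y hy
            obtain ⟨hyY, hcy⟩ := (hBmem _).mp hy
            rcases hcy x1 hx1 with h | h
            · rcases hcy x2 hx2 with h' | h'
              · exact absurd (h.symm.trans h') hx12r
              · exact h'.trans hx2c
            · exact h.trans hx1c
          have hdisj : Disjoint S B := by
            rw [Finset.disjoint_left]
            intro a ha hab
            exact hXY a (hS ha) (hBY hab)
          have hsub : S ∪ B ⊆ (P ×ˢ {y1.2}) := by
            intro a ha
            rcases Finset.mem_union.mp ha with h | h
            · exact Finset.mem_product.mpr ⟨(Finset.mem_product.mp (hXR (hS h))).1,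
                Finset.mem_singleton.mpr (hSc a h)⟩
            · exact Finset.mem_product.mpr ⟨(Finset.mem_product.mp (hYR (hBY h))).1,
                Finset.mem_singleton.mpr (hBc a h)⟩
          have hcu := Finset.card_le_card hsub
          rw [Finset.card_union_of_disjoint hdisj] at hcu
          have hq : (P ×ˢ ({y1.2} : Finset (Fin n))).card = P.card := by simp
          have hpn : P.card ≤ n := by
            have := Finset.card_le_univ P
            simpa using this
          omega
        · -- general position
          have hSsub : S ⊆ {(y1.1, y2.2), (y2.1, y1.2)} := by
            intro x hx
            rcases hc1 x hx with h | h <;> rcases hc2 x hx with h' | h'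
            · exact absurd (h.trans h'.symm) hrow
            · simp only [Finset.mem_insert, Finset.mem_singleton]
              exact Or.inl (Prod.ext h.symm h'.symm)
            · simp only [Finset.mem_insert, Finset.mem_singleton]
              exact Or.inr (Prod.ext h'.symm h.symm)
            · exact absurd (h.trans h'.symm) hcol
          have hpairne : ((y1.1, y2.2) : Fin n × Fin n) ≠ (y2.1, y1.2) := by
            intro h
            rw [Prod.mk.injEq] at h
            exact hrow h.1
          have hpc : ({(y1.1, y2.2), (y2.1, y1.2)} : Finset (Fin n × Fin n)).card = 2 :=
            Finset.card_pair hpairne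
          have hSeq : S = {(y1.1, y2.2), (y2.1, y1.2)} :=
            Finset.eq_of_subset_of_card_le hSsub (by omega)
          have ha : ((y1.1, y2.2) : Fin n × Fin n) ∈ S := by
            rw [hSeq]; simp
          have hb : ((y2.1, y1.2) : Fin n × Fin n) ∈ S := by
            rw [hSeq]; simp
          have hBsub : B ⊆ {y1, y2} := by
            intro y hy
            obtain ⟨hyY, hcy⟩ := (hBmem _).mp hy
            have h1 := hcy _ ha
            have h2 := hcy _ hb
            simp only [Finset.mem_insert, Finset.mem_singleton]
            rcases h1 with h | h <;> rcases h2 with h' | h'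
            · exact absurd (h.symm.trans h') hrow
            · exact Or.inl (Prod.ext h h')
            · exact Or.inr (Prod.ext h' h)
            · exact absurd (show y1.2 = y2.2 from h'.symm.trans h) hcol
          have hBc : B.card ≤ 2 := le_trans (Finset.card_le_card hBsub) (Finset.card_insert_le _ _ |>.trans (by simp))
          have hSc : S.card = 2 := by rw [hSeq]; exact hpc
          omega

end aux

/-- Given a `p × q` sub-rectangle `P ×ˢ Q` with `p + q = n + 1` and `p - 2 ≤ q ≤ p + 2`,
containing a set `X` of `n` blue cells and a set `Y` of `n` red cells, there is a
bijection `φ : X → Y` so that `x` and `φ x` are in different rows and columns;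
consequently the `2n` cells can be filled with symbols `1, ..., n`, each symbol in
exactly one blue and exactly one red cell, forming a partial Latin square. -/
theorem stmt11 (n p q : ℕ) (hn : 7 ≤ n) (blue : Fin n × Fin n → Bool)
    (P Q : Finset (Fin n)) (hP : P.card = p) (hQ : Q.card = q)
    (hpq : p + q = n + 1) (h1 : p - 2 ≤ q) (h2 : q ≤ p + 2)
    (X Y : Finset (Fin n × Fin n))
    (hXR : X ⊆ P ×ˢ Q) (hXcard : X.card = n) (hXb : ∀ c ∈ X, blue c = true)
    (hYR : Y ⊆ P ×ˢ Q) (hYcard : Y.card = n) (hYr : ∀ c ∈ Y, blue c = false) :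
    (∃ φ : Fin n × Fin n → Fin n × Fin n, Set.BijOn φ ↑X ↑Y ∧
      ∀ x ∈ X, (φ x).1 ≠ x.1 ∧ (φ x).2 ≠ x.2) ∧
    (∃ L : Fin n × Fin n → Option (Fin n), IsPartialLatin n L ∧
      (∀ c : Fin n × Fin n, (L c).isSome → c ∈ P ×ˢ Q) ∧
      (∀ k : Fin n,
        (Finset.univ.filter fun c => L c = some k ∧ blue c = true).card = 1 ∧
        (Finset.univ.filter fun c => L c = some k ∧ blue c = false).card = 1)) := by
  classical
  have hXY : ∀ c, c ∈ X → c ∉ Y := by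
    intro c hc hc'
    have h1 := hXb c hc
    have h2 := hYr c hc'
    simp [h1] at h2
  have hpq' : P.card + Q.card = n + 1 := by rw [hP, hQ]; exact hpq
  -- Hall's condition
  set t : ↥X → Finset (Fin n × Fin n) :=
    fun x => Y.filter (fun y => y.1 ≠ (x : Fin n × Fin n).1 ∧ y.2 ≠ (x : Fin n × Fin n).2)
    with ht
  have hhall : ∀ s : Finset ↥X, s.card ≤ (s.biUnion t).card := by
    intro s
    set S : Finset (Fin n × Fin n) := s.image Subtype.val with hSdef
    have hScard : S.card = s.card := Finset.card_image_of_injective _ Subtype.val_injective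
    have hSX : S ⊆ X := by
      intro a ha
      obtain ⟨x, _, rfl⟩ := Finset.mem_image.mp ha
      exact x.2
    set B := Y.filter (fun y => ∀ x ∈ S, y.1 = x.1 ∨ y.2 = x.2) with hBdef
    have hbound := hall_bound (by omega) P Q hpq' X Y blue hXR hXcard hXb hYR hYcard hYr S hSX
      B (fun y => by simp [hBdef, Finset.mem_filter])
    have hsub : Y \ B ⊆ s.biUnion t := by
      intro y hy
      obtain ⟨hyY, hyB⟩ := Finset.mem_sdiff.mp hy
      have : ¬(∀ x ∈ S, y.1 = x.1 ∨ y.2 = x.2) := by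
        intro hcon
        exact hyB (Finset.mem_filter.mpr ⟨hyY, hcon⟩)
      push_neg at this
      obtain ⟨x, hxS, hx1, hx2⟩ := this
      obtain ⟨x', hx's, rfl⟩ := Finset.mem_image.mp hxS
      refine Finset.mem_biUnion.mpr ⟨x', hx's, ?_⟩
      exact Finset.mem_filter.mpr ⟨hyY, hx1, hx2⟩
    have hBY : B ⊆ Y := Finset.filter_subset _ _
    have hsd : (Y \ B).card = Y.card - B.card := Finset.card_sdiff_of_subset hBY
    have := Finset.card_le_card hsub
    have hBn : B.card ≤ n := le_trans (Finset.card_le_card hBY) (le_of_eq hYcard)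
    omega
  obtain ⟨f, hfinj, hf⟩ := (Finset.all_card_le_biUnion_card_iff_exists_injective t).mp hhall
  have hY0 : Y.Nonempty := Finset.card_pos.mp (by omega)
  obtain ⟨y₀, hy₀⟩ := hY0
  set φ : Fin n × Fin n → Fin n × Fin n :=
    fun c => if h : c ∈ X then f ⟨c, h⟩ else y₀ with hφdef
  have hφmem : ∀ (c : Fin n × Fin n) (h : c ∈ X), φ c = f ⟨c, h⟩ := by
    intro c h
    simp [hφdef, h]
  have hφY : ∀ c ∈ X, φ c ∈ Y := by
    intro c hc
    rw [hφmem c hc]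
    exact Finset.filter_subset _ _ (hf ⟨c, hc⟩)
  have hφne : ∀ x ∈ X, (φ x).1 ≠ x.1 ∧ (φ x).2 ≠ x.2 := by
    intro x hx
    have := (Finset.mem_filter.mp (hf ⟨x, hx⟩)).2
    rw [hφmem x hx]
    exact this
  have hinjOn : Set.InjOn φ ↑X := by
    intro a ha b hb hab
    have ha' : a ∈ X := ha
    have hb' : b ∈ X := hb
    rw [hφmem a ha', hφmem b hb'] at hab
    have := hfinj hab
    exact congrArg Subtype.val this
  have himg : X.image φ = Y := by
    apply Finset.eq_of_subset_of_card_le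
    · intro y hy
      obtain ⟨x, hx, rfl⟩ := Finset.mem_image.mp hy
      exact hφY x hx
    · rw [Finset.card_image_of_injOn (by intro a ha b hb; exact hinjOn ha hb), hXcard, hYcard]
  have hsurjOn : Set.SurjOn φ ↑X ↑Y := by
    intro y hy
    have : y ∈ X.image φ := himg ▸ (hy : y ∈ Y)
    obtain ⟨x, hx, rfl⟩ := Finset.mem_image.mp this
    exact ⟨x, hx, rfl⟩
  have hbij : Set.BijOn φ ↑X ↑Y := ⟨fun c hc => hφY c hc, hinjOn, hsurjOn⟩
  refine ⟨⟨φ, hbij, hφne⟩, ?_⟩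
  -- part 2
  set e : ↥X ≃ Fin n := X.equivFin.trans (finCongr hXcard) with he
  set xk : Fin n → Fin n × Fin n := fun k => ↑(e.symm k) with hxk
  set yk : Fin n → Fin n × Fin n := fun k => φ (xk k) with hyk
  have hxkX : ∀ k, xk k ∈ X := fun k => (e.symm k).2
  have hykY : ∀ k, yk k ∈ Y := fun k => hφY _ (hxkX k)
  haveI : Nonempty (Fin n × Fin n) := ⟨y₀⟩
  have hinvX : ∀ c ∈ Y, Function.invFunOn φ ↑X c ∈ X := by
    intro c hc
    obtain ⟨a, ha, hac⟩ := hsurjOn (hc : c ∈ (Y : Set (Fin n × Fin n)))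
    exact Function.invFunOn_mem ⟨a, ha, hac⟩
  have hinvEq : ∀ c ∈ Y, φ (Function.invFunOn φ ↑X c) = c := by
    intro c hc
    obtain ⟨a, ha, hac⟩ := hsurjOn (hc : c ∈ (Y : Set (Fin n × Fin n)))
    exact Function.invFunOn_eq ⟨a, ha, hac⟩
  set L : Fin n × Fin n → Option (Fin n) :=
    fun c => if hc : c ∈ X then some (e ⟨c, hc⟩)
      else if hc' : c ∈ Y then some (e ⟨Function.invFunOn φ ↑X c, hinvX c hc'⟩)
      else none with hL
  have hLx : ∀ (c : Fin n × Fin n) (hc : c ∈ X), L c = some (e ⟨c, hc⟩) := by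
    intro c hc; simp [hL, hc]
  have hLy : ∀ (c : Fin n × Fin n) (hc : c ∈ Y),
      L c = some (e ⟨Function.invFunOn φ ↑X c, hinvX c hc⟩) := by
    intro c hc
    have : c ∉ X := fun h => hXY c h hc
    simp [hL, this, hc]
  have hLxk : ∀ k, L (xk k) = some k := by
    intro k
    rw [hLx _ (hxkX k)]
    congr 1
    have : (⟨xk k, hxkX k⟩ : ↥X) = e.symm k := Subtype.ext rfl
    rw [this, Equiv.apply_symm_apply]
  have hLyk : ∀ k, L (yk k) = some k := by
    intro k
    rw [hLy _ (hykY k)]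
    congr 1
    have h1 : Function.invFunOn φ ↑X (yk k) = xk k := by
      have hm := hinvX _ (hykY k)
      have he' := hinvEq _ (hykY k)
      have : φ (Function.invFunOn φ ↑X (yk k)) = φ (xk k) := by rw [he']
      exact hinjOn (Finset.mem_coe.mpr hm) (Finset.mem_coe.mpr (hxkX k)) this
    have : (⟨Function.invFunOn φ ↑X (yk k), hinvX _ (hykY k)⟩ : ↥X) = e.symm k := by
      exact Subtype.ext h1
    rw [this, Equiv.apply_symm_apply]
  have hchar : ∀ (c : Fin n × Fin n) (k : Fin n), L c = some k → c = xk k ∨ c = yk k := by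
    intro c k hck
    by_cases hc : c ∈ X
    · left
      rw [hLx c hc] at hck
      have h' : e ⟨c, hc⟩ = k := by injection hck
      have h'' := congrArg e.symm h'
      rw [Equiv.symm_apply_apply] at h''
      exact congrArg Subtype.val h''
    · by_cases hc' : c ∈ Y
      · right
        rw [hLy c hc'] at hck
        have hek : e ⟨Function.invFunOn φ ↑X c, hinvX c hc'⟩ = k := by
          injection hck
        have : Function.invFunOn φ ↑X c = xk k := by
          have := congrArg e.symm hek
          rw [Equiv.symm_apply_apply] at this
          exact congrArg Subtype.val this
        rw [hyk]
        simp only []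
        rw [← this]
        exact (hinvEq c hc').symm
      · rw [hL] at hck
        simp [hc, hc'] at hck
  refine ⟨L, ?_, ?_, ?_⟩
  · intro c₁ c₂ hne hsome heq
    obtain ⟨k, hk⟩ := Option.isSome_iff_exists.mp hsome
    have hk2 : L c₂ = some k := heq ▸ hk
    have h1 := hchar c₁ k hk
    have h2 := hchar c₂ k hk2
    have hd := hφne (xk k) (hxkX k)
    rcases h1 with rfl | rfl <;> rcases h2 with h2 | h2
    · exact absurd h2.symm hne
    · rw [h2]; exact ⟨(hd.1).symm, (hd.2).symm⟩
    · rw [h2]; exact ⟨hd.1, hd.2⟩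
    · exact absurd h2.symm hne
  · intro c hc
    by_cases h : c ∈ X
    · exact hXR h
    · by_cases h' : c ∈ Y
      · exact hYR h'
      · rw [hL] at hc; simp [h, h'] at hc
  · intro k
    have hxblue : blue (xk k) = true := hXb _ (hxkX k)
    have hyred : blue (yk k) = false := hYr _ (hykY k)
    constructor
    · have : (Finset.univ.filter fun c => L c = some k ∧ blue c = true) = {xk k} := by
        ext c
        simp only [Finset.mem_filter, Finset.mem_univ, true_and, Finset.mem_singleton]
        constructor
        · rintro ⟨hck, hblue⟩
          rcases hchar c k hck with rfl | rfl
          · rfl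
          · rw [hyred] at hblue; exact absurd hblue (by simp)
        · rintro rfl
          exact ⟨hLxk k, hxblue⟩
      rw [this, Finset.card_singleton]
    · have : (Finset.univ.filter fun c => L c = some k ∧ blue c = false) = {yk k} := by
        ext c
        simp only [Finset.mem_filter, Finset.mem_univ, true_and, Finset.mem_singleton]
        constructor
        · rintro ⟨hck, hblue⟩
          rcases hchar c k hck with rfl | rfl
          · rw [hxblue] at hblue; exact absurd hblue (by simp)
          · rfl
        · rintro rfl
          exact ⟨hLyk k, hyred⟩
      rw [this, Finset.card_singleton]
end

section
/- Let 0 < r, s < n and let A be a partial Latin square of order n in which cell (i,j) is filled if and only if i ≤ r and j ≤ s. Then A can be completed to a Latin square of order n if and only if N(k) ≥ r + s − n for every symbol k = 1,...,n, where N(k) denotes the number of filled cells of A containing the symbol k. -/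
/-- A Latin square of order `n`: each symbol occurs exactly once in each row and
exactly once in each column. -/
def IsLatin (n : ℕ) (L : Fin n × Fin n → Fin n) : Prop :=
  (∀ i : Fin n, Function.Injective fun j => L (i, j)) ∧
  (∀ j : Fin n, Function.Injective fun i => L (i, j))

/-- `L'` completes the partial Latin square `L`: it agrees with `L` on all filled cells. -/
def Completes (n : ℕ) (L' : Fin n × Fin n → Fin n) (L : Fin n × Fin n → Option (Fin n)) :
    Prop :=
  ∀ c : Fin n × Fin n, ∀ k : Fin n, L c = some k → L' c = k

open Finset

theorem Finset.card_le_card_biUnion_of_degrees {ι α : Type*} [DecidableEq α] {S : Finset ι}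
    {T : ι → Finset α} {d : ℕ} (hd : 0 < d) (hT : ∀ i ∈ S, d ≤ #(T i))
    (hdeg : ∀ a ∈ S.biUnion T, #{i ∈ S | a ∈ T i} ≤ d) : #S ≤ #(S.biUnion T) := by
  refine Nat.le_of_mul_le_mul_right (card_mul_le_card_mul (fun i a => a ∈ T i) ?_ hdeg) hd
  intro i hi
  refine (hT i hi).trans (card_le_card fun a ha => ?_)
  exact (mem_bipartiteAbove _).2 ⟨mem_biUnion.2 ⟨i, hi, ha⟩, ha⟩

variable {n : ℕ}

def symbolCount (M : Fin n × Fin n → Option (Fin n)) (k : Fin n) : ℕ :=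
  #{c | M c = some k}

def IsFilledRect (M : Fin n × Fin n → Option (Fin n)) (r t : ℕ) : Prop :=
  ∀ c : Fin n × Fin n, (M c).isSome ↔ (c.1 : ℕ) < r ∧ (c.2 : ℕ) < t

def missingSymbols (M : Fin n × Fin n → Option (Fin n)) (i : Fin n) : Finset (Fin n) :=
  {k | ∀ j, M (i, j) ≠ some k}

def missingRows (M : Fin n × Fin n → Option (Fin n)) (r : ℕ) (k : Fin n) : Finset (Fin n) :=
  {i | (i : ℕ) < r ∧ k ∈ missingSymbols M i}

section

variable {M : Fin n × Fin n → Option (Fin n)}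

theorem isPartialLatin_iff : IsPartialLatin n M ↔ ∀ ⦃c₁ c₂ : Fin n × Fin n⦄ ⦃k : Fin n⦄,
    M c₁ = some k → M c₂ = some k → c₁.1 = c₂.1 ∨ c₁.2 = c₂.2 → c₁ = c₂ := by
  refine ⟨fun hM c₁ c₂ k h₁ h₂ h => ?_, fun h c₁ c₂ hne hsome heq => ?_⟩
  · by_contra hne
    have := hM c₁ c₂ hne (by simp [h₁]) (h₁.trans h₂.symm)
    tauto
  · obtain ⟨k, hk⟩ := Option.isSome_iff_exists.1 hsome
    exact not_or.1 fun hor => hne (h hk (heq ▸ hk) hor)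

theorem IsPartialLatin.comp_swap (hM : IsPartialLatin n M) : IsPartialLatin n (M ∘ Prod.swap) :=
  isPartialLatin_iff.2 fun _ _ _ h₁ h₂ h =>
    Prod.swap_injective (isPartialLatin_iff.1 hM h₁ h₂ h.symm)

theorem IsFilledRect.comp_swap {r t : ℕ} (h : IsFilledRect M r t) :
    IsFilledRect (M ∘ Prod.swap) t r :=
  fun c => (h c.swap).trans and_comm

theorem symbolCount_comp_swap (k : Fin n) : symbolCount (M ∘ Prod.swap) k = symbolCount M k :=
  card_equiv (Equiv.prodComm _ _) (by simp)

theorem symbolCount_le_of_extends {M' : Fin n × Fin n → Option (Fin n)}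
    (hext : ∀ c k, M c = some k → M' c = some k) (k : Fin n) :
    symbolCount M k ≤ symbolCount M' k :=
  card_le_card fun c hc => by simpa using hext c k (by simpa using hc)

theorem IsPartialLatin.card_rowSymbols (hM : IsPartialLatin n M) (i : Fin n) :
    #{k | ∃ j, M (i, j) = some k} = #{j | (M (i, j)).isSome} := by
  symm
  refine card_bij (fun j hj => (M (i, j)).get (by simpa using hj)) (fun j hj => ?_)
    (fun j₁ hj₁ j₂ hj₂ h => ?_) (fun k hk => ?_)
  · simp
  · obtain ⟨k, hk⟩ := Option.isSome_iff_exists.1 (by simpa using hj₁)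
    simp only [hk, Option.get_some] at h
    have := isPartialLatin_iff.1 hM (c₂ := (i, j₂)) hk (by rw [h, Option.some_get]) (Or.inl rfl)
    exact (Prod.ext_iff.1 this).2
  · obtain ⟨j, hj⟩ := by simpa using hk
    exact ⟨j, by simp [hj], by simp [hj]⟩

theorem IsPartialLatin.card_rowsContaining (hM : IsPartialLatin n M) (k : Fin n) :
    #{i | ∃ j, M (i, j) = some k} = symbolCount M k := by
  symm
  refine card_nbij Prod.fst (fun c hc => ?_) (fun c₁ hc₁ c₂ hc₂ h => ?_) (fun i hi => ?_)
  · simp only [coe_filter, mem_univ, true_and, Set.mem_ofPred_eq] at hc ⊢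
    exact ⟨c.2, hc⟩
  · simp only [coe_filter, mem_univ, true_and, Set.mem_ofPred_eq] at hc₁ hc₂
    exact isPartialLatin_iff.1 hM hc₁ hc₂ (Or.inl h)
  · obtain ⟨j, hj⟩ := by simpa using hi
    exact ⟨(i, j), by simpa using hj, rfl⟩

theorem card_missingSymbols {r t : ℕ} (hM : IsPartialLatin n M) (hfill : IsFilledRect M r t)
    (htn : t ≤ n) {i : Fin n} (hi : (i : ℕ) < r) : #(missingSymbols M i) = n - t := by
  have hrow : #{k | ∃ j, M (i, j) = some k} = t := by
    rw [hM.card_rowSymbols, ← min_eq_right htn, ← Fin.card_filter_val_lt]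
    congr 1
    ext j
    simp [hfill (i, j), hi]
  have hsplit := card_filter_add_card_filter_not (s := univ)
    (fun k : Fin n => ∃ j, M (i, j) = some k)
  rw [card_univ, Fintype.card_fin, hrow] at hsplit
  have : missingSymbols M i = ({k | ¬ ∃ j, M (i, j) = some k} : Finset (Fin n)) := by
    ext; simp [missingSymbols]
  rw [this]
  omega

theorem card_missingRows_add_symbolCount {r t : ℕ} (hM : IsPartialLatin n M)
    (hfill : IsFilledRect M r t) (hrn : r ≤ n) (k : Fin n) :
    #(missingRows M r k) + symbolCount M k = r := by
  have hrows : #{i : Fin n | (i : ℕ) < r ∧ ∃ j, M (i, j) = some k} = symbolCount M k := by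
    rw [← hM.card_rowsContaining]
    congr 1
    ext i
    simp only [mem_filter, mem_univ, true_and, and_iff_right_iff_imp]
    rintro ⟨j, hj⟩
    exact ((hfill (i, j)).1 (by simp [hj])).1
  have := card_filter_add_card_filter_not (s := {i : Fin n | (i : ℕ) < r})
    (fun i => ∃ j, M (i, j) = some k)
  simp only [filter_filter, Fin.card_filter_val_lt, min_eq_right hrn, not_exists] at this
  rw [missingRows, ← hrows, add_comm]
  simpa [missingSymbols] using this

end

section

variable {M : Fin n × Fin n → Option (Fin n)} {r t : ℕ}

/-- Rows `i ≥ r` are dummy rows that may only take symbols with an occurrence to spare; a perfect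
matching of all `n` rows then places every critical symbol in a real row. -/
def columnCandidates (M : Fin n × Fin n → Option (Fin n)) (r t : ℕ) (i : Fin n) :
    Finset (Fin n) :=
  if (i : ℕ) < r then missingSymbols M i else ({k | r + t < symbolCount M k + n} : Finset (Fin n))

theorem card_le_card_biUnion_columnCandidates (hM : IsPartialLatin n M)
    (hfill : IsFilledRect M r t) (hrn : r ≤ n) (htn : t < n)
    (hcount : ∀ k, r + t ≤ symbolCount M k + n) (S : Finset (Fin n)) :
    #S ≤ #(S.biUnion (columnCandidates M r t)) := by
  have hrow := fun {i} => card_missingSymbols hM hfill htn.le (i := i)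
  have hcol := card_missingRows_add_symbolCount hM hfill hrn
  by_cases hS : ∀ i ∈ S, (i : ℕ) < r
  · refine card_le_card_biUnion_of_degrees (d := n - t) (by omega) (fun i hi => ?_) fun k _ => ?_
    · rw [columnCandidates, if_pos (hS i hi), hrow (hS i hi)]
    · calc #{i ∈ S | k ∈ columnCandidates M r t i} ≤ #(missingRows M r k) := by
            refine card_le_card fun i hi => ?_
            obtain ⟨hiS, hik⟩ := mem_filter.1 hi
            rw [columnCandidates, if_pos (hS i hiS)] at hik
            simpa [missingRows, hS i hiS] using hik
        _ ≤ n - t := by have := hcol k; have := hcount k; omega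
  obtain ⟨i₀, hi₀, hri₀⟩ : ∃ i ∈ S, r ≤ (i : ℕ) := by simpa using hS
  set U := S.biUnion (columnCandidates M r t)
  -- `S` contains a dummy row, so the symbols outside `U` are critical: each is missing from
  -- exactly `n - t` real rows, none of them in `S`. Double counting then bounds `#Uᶜ` by `#Sᶜ`.
  have hcritical : ∀ k ∈ Uᶜ, r + t = symbolCount M k + n := fun k hk => by
    have : k ∉ columnCandidates M r t i₀ := fun h => mem_compl.1 hk (mem_biUnion.2 ⟨i₀, hi₀, h⟩)
    have := hcount k
    simp only [columnCandidates, if_neg (not_lt.2 hri₀), mem_filter, mem_univ, true_and] at *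
    omega
  have hUc : #Uᶜ ≤ #Sᶜ := by
    refine (card_le_card_biUnion_of_degrees (T := missingRows M r) (d := n - t) (by omega)
      (fun k hk => ?_) fun i hi => ?_).trans (card_le_card (biUnion_subset.2 fun k hk i hi => ?_))
    · have := hcol k; have := hcritical k hk; omega
    · obtain ⟨k, -, hk⟩ := mem_biUnion.1 hi
      rw [← hrow (mem_filter.1 hk).2.1]
      exact card_le_card fun k hk => (mem_filter.1 (mem_filter.1 hk).2).2.2
    · refine mem_compl.2 fun hiS => mem_compl.1 hk (mem_biUnion.2 ⟨i, hiS, ?_⟩)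
      obtain ⟨hir, hik⟩ := (mem_filter.1 hi).2
      rwa [columnCandidates, if_pos hir]
  have := card_compl U
  have := card_compl S
  have := card_le_univ U
  have := card_le_univ S
  simp only [Fintype.card_fin] at *
  omega

theorem exists_injective_columnChoice (hM : IsPartialLatin n M) (hfill : IsFilledRect M r t)
    (hrn : r ≤ n) (htn : t < n) (hcount : ∀ k, r + t ≤ symbolCount M k + n) :
    ∃ f : Fin n → Fin n, Function.Injective f ∧
      (∀ i : Fin n, (i : ℕ) < r → f i ∈ missingSymbols M i) ∧
      ∀ i : Fin n, r ≤ (i : ℕ) → r + t < symbolCount M (f i) + n := by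
  obtain ⟨f, hf, hfT⟩ := (all_card_le_biUnion_card_iff_existsInjective' _).1
    (card_le_card_biUnion_columnCandidates hM hfill hrn htn hcount)
  refine ⟨f, hf, fun i hi => ?_, fun i hi => ?_⟩
  · simpa [columnCandidates, hi] using hfT i
  · simpa [columnCandidates, not_lt.2 hi] using hfT i

end

def extendColumn (M : Fin n × Fin n → Option (Fin n)) (r t : ℕ) (f : Fin n → Fin n) :
    Fin n × Fin n → Option (Fin n) :=
  fun c => if (c.1 : ℕ) < r ∧ (c.2 : ℕ) = t then some (f c.1) else M c

section

variable {M : Fin n × Fin n → Option (Fin n)} {r t : ℕ} {f : Fin n → Fin n}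

theorem IsFilledRect.extendColumn (hfill : IsFilledRect M r t) :
    IsFilledRect (extendColumn M r t f) r (t + 1) := by
  intro c
  by_cases h : (c.1 : ℕ) < r ∧ (c.2 : ℕ) = t
  · simp only [_root_.extendColumn, if_pos h, Option.isSome_some, true_iff]
    omega
  · rw [_root_.extendColumn, if_neg h, hfill c]
    omega

theorem extendColumn_eq_of_eq_some (hfill : IsFilledRect M r t) {c : Fin n × Fin n}
    {k : Fin n} (hc : M c = some k) : extendColumn M r t f c = some k := by
  have := (hfill c).1 (by simp [hc])
  rw [extendColumn, if_neg (by omega), hc]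

theorem IsPartialLatin.extendColumn (hM : IsPartialLatin n M) (hfill : IsFilledRect M r t)
    (hf : Function.Injective f) (hmiss : ∀ i : Fin n, (i : ℕ) < r → f i ∈ missingSymbols M i) :
    IsPartialLatin n (extendColumn M r t f) := by
  have hnew_old : ∀ {c₁ c₂ : Fin n × Fin n}, (c₁.1 : ℕ) < r → (c₁.2 : ℕ) = t →
      M c₂ = some (f c₁.1) → ¬(c₁.1 = c₂.1 ∨ c₁.2 = c₂.2) := by
    rintro c₁ ⟨i, j⟩ hr ht hc (rfl | hj)
    · exact (mem_filter.1 (hmiss _ hr)).2 j hc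
    · have := ((hfill (i, j)).1 (by simp [hc])).2
      omega
  refine isPartialLatin_iff.2 fun c₁ c₂ k h₁ h₂ h => ?_
  unfold _root_.extendColumn at h₁ h₂
  split_ifs at h₁ h₂ with hc₁ hc₂ hc₂
  · exact Prod.ext (hf (Option.some_injective _ (h₁.trans h₂.symm))) (Fin.ext (by omega))
  · exact absurd h (hnew_old hc₁.1 hc₁.2 (h₂.trans h₁.symm))
  · exact absurd (h.imp Eq.symm Eq.symm) (hnew_old hc₂.1 hc₂.2 (h₁.trans h₂.symm))
  · exact isPartialLatin_iff.1 hM h₁ h₂ h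

theorem symbolCount_lt_symbolCount_extendColumn (hfill : IsFilledRect M r t) (htn : t < n)
    {i : Fin n} (hi : (i : ℕ) < r) :
    symbolCount M (f i) < symbolCount (extendColumn M r t f) (f i) := by
  refine card_lt_card ⟨fun c hc => ?_, fun h => ?_⟩
  · simp only [mem_filter, mem_univ, true_and] at hc ⊢
    exact extendColumn_eq_of_eq_some hfill hc
  · have hnew : extendColumn M r t f (i, ⟨t, htn⟩) = some (f i) := by
      simp [extendColumn, hi]
    have hold : M (i, ⟨t, htn⟩) = some (f i) := by simpa using h (by simpa using hnew)
    simpa using (hfill (i, ⟨t, htn⟩)).1 (by simp [hold])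

theorem exists_extension_addColumn (hM : IsPartialLatin n M) (hfill : IsFilledRect M r t)
    (hrn : r ≤ n) (htn : t < n) (hcount : ∀ k, r + t ≤ symbolCount M k + n) :
    ∃ M' : Fin n × Fin n → Option (Fin n), IsPartialLatin n M' ∧ IsFilledRect M' r (t + 1) ∧
      (∀ c k, M c = some k → M' c = some k) ∧ ∀ k, r + (t + 1) ≤ symbolCount M' k + n := by
  obtain ⟨f, hf, hmiss, hspare⟩ := exists_injective_columnChoice hM hfill hrn htn hcount
  have hext : ∀ c k, M c = some k → extendColumn M r t f c = some k :=
    fun _ _ => extendColumn_eq_of_eq_some hfill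
  refine ⟨_, hM.extendColumn hfill hf hmiss, hfill.extendColumn, hext, fun k => ?_⟩
  obtain ⟨i, rfl⟩ := (Finite.injective_iff_surjective.1 hf) k
  by_cases hi : (i : ℕ) < r
  · have := symbolCount_lt_symbolCount_extendColumn (f := f) hfill htn hi
    have := hcount (f i)
    omega
  · have := symbolCount_le_of_extends hext (f i)
    have := hspare i (not_lt.1 hi)
    omega

end

theorem exists_extension_fullWidth {M : Fin n × Fin n → Option (Fin n)} {r t : ℕ}
    (hM : IsPartialLatin n M) (hfill : IsFilledRect M r t)
    (hrn : r ≤ n) (htn : t ≤ n) (hcount : ∀ k, r + t ≤ symbolCount M k + n) :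
    ∃ M' : Fin n × Fin n → Option (Fin n), IsPartialLatin n M' ∧ IsFilledRect M' r n ∧
      (∀ c k, M c = some k → M' c = some k) ∧ ∀ k, r ≤ symbolCount M' k := by
  obtain rfl | htn := htn.eq_or_lt
  · exact ⟨M, hM, hfill, fun _ _ => id, fun k => by have := hcount k; omega⟩
  obtain ⟨M₁, hM₁, hfill₁, hext₁, hcount₁⟩ := exists_extension_addColumn hM hfill hrn htn hcount
  obtain ⟨M', hM', hfill', hext', hcount'⟩ :=
    exists_extension_fullWidth hM₁ hfill₁ hrn htn hcount₁
  exact ⟨M', hM', hfill', fun c k h => hext' c k (hext₁ c k h), hcount'⟩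
termination_by n - t

section

variable {M : Fin n × Fin n → Option (Fin n)}

theorem IsPartialLatin.isLatin_get (hM : IsPartialLatin n M) (hfull : ∀ c, (M c).isSome) :
    IsLatin n fun c => (M c).get (hfull c) := by
  have hget : ∀ {c₁ c₂}, (M c₁).get (hfull c₁) = (M c₂).get (hfull c₂) →
      c₁.1 = c₂.1 ∨ c₁.2 = c₂.2 → c₁ = c₂ := fun h =>
    isPartialLatin_iff.1 hM (Option.some_get _).symm (by rw [h, Option.some_get])
  exact ⟨fun i j₁ j₂ h => congrArg Prod.snd (hget h (Or.inl rfl)),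
    fun j i₁ i₂ h => congrArg Prod.fst (hget h (Or.inr rfl))⟩

theorem completes_get {L : Fin n × Fin n → Option (Fin n)} (hfull : ∀ c, (M c).isSome)
    (hext : ∀ c k, L c = some k → M c = some k) : Completes n (fun c => (M c).get (hfull c)) L :=
  fun c k hc => by simp [hext c k hc]

end

theorem exists_completion_of_symbolCount {L : Fin n × Fin n → Option (Fin n)} {r s : ℕ}
    (hL : IsPartialLatin n L) (hfill : IsFilledRect L r s) (hrn : r ≤ n) (hsn : s ≤ n)
    (hcount : ∀ k, r + s ≤ symbolCount L k + n) :
    ∃ L' : Fin n × Fin n → Fin n, IsLatin n L' ∧ Completes n L' L := by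
  obtain ⟨M₁, hM₁, hfill₁, hext₁, hcount₁⟩ := exists_extension_fullWidth hL hfill hrn hsn hcount
  obtain ⟨M₂, hM₂, hfill₂, hext₂, -⟩ := exists_extension_fullWidth hM₁.comp_swap
    hfill₁.comp_swap le_rfl hrn fun k => by rw [symbolCount_comp_swap]; have := hcount₁ k; omega
  have hfull : ∀ c, ((M₂ ∘ Prod.swap) c).isSome :=
    fun c => (hfill₂.comp_swap c).2 ⟨c.1.2, c.2.2⟩
  exact ⟨_, hM₂.comp_swap.isLatin_get hfull,
    completes_get hfull fun c k h => hext₂ c.swap k (hext₁ c k h)⟩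

theorem symbolCount_add_le_of_completes {L : Fin n × Fin n → Option (Fin n)}
    {L' : Fin n × Fin n → Fin n} {r s : ℕ} (hfill : IsFilledRect L r s) (hrn : r ≤ n)
    (hsn : s ≤ n) (hL' : IsLatin n L') (hcomp : Completes n L' L) (k : Fin n) :
    r + s ≤ symbolCount L k + n := by
  choose p hp using fun i => Finite.surjective_of_injective (hL'.1 i) k
  simp only at hp
  have hp_inj : Function.Injective p := fun i₁ i₂ h =>
    hL'.2 (p i₁) (show L' (i₁, p i₁) = L' (i₂, p i₁) by rw [hp i₁, h, hp i₂])
  set R : Finset (Fin n) := {i | (i : ℕ) < r}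
  have hleft : #{i ∈ R | (p i : ℕ) < s} ≤ symbolCount L k := by
    refine card_le_card_of_injOn (fun i => (i, p i)) (fun i hi => ?_)
      fun _ _ _ _ h => congrArg Prod.fst h
    obtain ⟨hir, hps⟩ : (i : ℕ) < r ∧ (p i : ℕ) < s := by simpa [R] using hi
    obtain ⟨m, hm⟩ := Option.isSome_iff_exists.1 ((hfill (i, p i)).2 ⟨hir, hps⟩)
    have : m = k := (hcomp _ _ hm).symm.trans (hp i)
    simp [hm, this]
  have hright : #{i ∈ R | ¬(p i : ℕ) < s} ≤ #{j : Fin n | ¬(j : ℕ) < s} :=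
    card_le_card_of_injOn p (fun i hi => by simpa using (mem_filter.1 hi).2) hp_inj.injOn
  have hsplit := card_filter_add_card_filter_not (s := R) (fun i => (p i : ℕ) < s)
  have hcols := card_filter_add_card_filter_not (s := univ) (fun j : Fin n => (j : ℕ) < s)
  have hR : #R = r := by simp [R, Fin.card_filter_val_lt, hrn]
  simp only [Fin.card_filter_val_lt, card_univ, Fintype.card_fin, min_eq_right hsn] at hcols
  omega

theorem stmt18_general (n r s : ℕ) (hrn : r < n) (hsn : s < n)
    (L : Fin n × Fin n → Option (Fin n)) (hL : IsPartialLatin n L)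
    (hfill : ∀ c : Fin n × Fin n, (L c).isSome ↔ (c.1 : ℕ) < r ∧ (c.2 : ℕ) < s) :
    (∃ L' : Fin n × Fin n → Fin n, IsLatin n L' ∧ Completes n L' L) ↔
      ∀ k : Fin n, r + s - n ≤ (Finset.univ.filter fun c => L c = some k).card := by
  have hcount : ∀ k, r + s - n ≤ symbolCount L k ↔ r + s ≤ symbolCount L k + n :=
    fun k => Nat.sub_le_iff_le_add
  refine ⟨fun ⟨L', hL', hcomp⟩ k => ?_, fun h => ?_⟩
  · exact (hcount k).2 (symbolCount_add_le_of_completes hfill hrn.le hsn.le hL' hcomp k)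
  · exact exists_completion_of_symbolCount hL hfill hrn.le hsn.le fun k => (hcount k).1 (h k)

/-- (Ryser's theorem.) Let `0 < r, s < n` and let `A` be a partial Latin square of order
`n` whose filled cells are exactly those `(i, j)` with `i ≤ r`, `j ≤ s` (0-indexed:
`i < r`, `j < s`). Then `A` can be completed to a Latin square of order `n` iff every
symbol occurs at least `r + s - n` times in `A`. -/
theorem stmt18 (n r s : ℕ) (hr0 : 0 < r) (hrn : r < n) (hs0 : 0 < s) (hsn : s < n)
    (L : Fin n × Fin n → Option (Fin n)) (hL : IsPartialLatin n L)
    (hfill : ∀ c : Fin n × Fin n, (L c).isSome ↔ (c.1 : ℕ) < r ∧ (c.2 : ℕ) < s) :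
    (∃ L' : Fin n × Fin n → Fin n, IsLatin n L' ∧ Completes n L' L) ↔
      ∀ k : Fin n, r + s - n ≤ (Finset.univ.filter fun c => L c = some k).card :=
  stmt18_general n r s hrn hsn L hL hfill
end
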